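/- arXiv:2403.00548 — 5 statements merged into one kernel-verified Lean document; each statement's English description precedes it below -/
import Mathlib

section
/- On an affine special Kähler manifold, if (Zⁱ) and (Z_i) are a conjugate system of holomorphic special coordinates and τᵢⱼ is defined by dZ_i = τᵢⱼ dZʲ, then τᵢⱼ is symmetric in i and j, and locally there exists a holomorphic function 𝔉 (the prepotential) with Z_i = ∂𝔉/∂Zⁱ and τᵢⱼ = ∂²𝔉/∂Zⁱ∂Zʲ; moreover the Kähler form satisfies ω = (i/2)·Im(τᵢⱼ)·dZⁱ ∧ dZ̄ʲ. -/
/-!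
Evaluating the invariance `ω(iu, iw) = ω(u, w)` on pairs of coordinate vectors gives
`Re τᵢⱼ = Re τⱼᵢ` and `Im τᵢⱼ = Im τⱼᵢ`. Symmetry of `τ` says exactly that the holomorphic
1-form `Z_i dZⁱ`, whose derivative is `τᵢⱼ dZʲ ⊗ dZⁱ`, is closed, so by the Poincaré lemma on a
ball it has a primitive `𝔉`. Once `τ` is symmetric, the terms of `dxⁱ ∧ dy_i` involving `Re τ`
cancel in pairs, and what is left is `(i/2) Im τᵢⱼ dZⁱ ∧ dZ̄ʲ`.
-/

open Complex Metric

theorem Finset.sum_sum_eq_zero_of_antisymm {ι M : Type*} [Fintype ι] [AddCommGroup M]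
    [IsAddTorsionFree M] (f : ι → ι → M) (h : ∀ i j, f i j = -f j i) :
    ∑ i, ∑ j, f i j = 0 := by
  refine self_eq_neg.mp ?_
  calc ∑ i, ∑ j, f i j = ∑ j, ∑ i, f i j := Finset.sum_comm
    _ = ∑ j, ∑ i, -f j i := Finset.sum_congr rfl fun j _ => Finset.sum_congr rfl fun i _ => h i j
    _ = -∑ i, ∑ j, f i j := by simp only [Finset.sum_neg_distrib]

theorem IsOpen.exists_local_primitive_of_hasFDerivAt_symmetric {𝕜 E F : Type*} [RCLike 𝕜]
    [NormedAddCommGroup E] [NormedSpace 𝕜 E] [NormedSpace ℝ E]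
    [NormedAddCommGroup F] [NormedSpace 𝕜 F] [NormedSpace ℝ F] [CompleteSpace F]
    {U : Set E} (hU : IsOpen U) {ω : E → E →L[𝕜] F} {dω : E → E →L[ℝ] E →L[𝕜] F}
    (hω : ∀ x ∈ U, HasFDerivAt ω (dω x) x) (hdω : ∀ a ∈ U, ∀ x y, dω a x y = dω a y x)
    {z₀ : E} (hz₀ : z₀ ∈ U) :
    ∃ V : Set E, IsOpen V ∧ z₀ ∈ V ∧ V ⊆ U ∧ ∃ f : E → F, ∀ z ∈ V, HasFDerivAt f (ω z) z := by
  obtain ⟨ε, hε, hball⟩ := Metric.isOpen_iff.mp hU z₀ hz₀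
  obtain ⟨f, hf⟩ :=
    (convex_ball z₀ ε).exists_forall_hasFDerivWithinAt_of_hasFDerivWithinAt_symmetric
      (fun x hx => (hω x (hball hx)).hasFDerivWithinAt) fun a ha x _ y _ => hdω a (hball ha) x y
  exact ⟨ball z₀ ε, isOpen_ball, mem_ball_self hε, hball, f,
    fun z hz => (hf z hz).hasFDerivAt (isOpen_ball.mem_nhds hz)⟩

section SpecialCoordinates

variable {n : ℕ}

/-- The form `dxⁱ ∧ dy_i` evaluated on `(u, w)`, for `x = Re Z` and `y_i = -Re Z_i`,
so that `dy_i = -Re (τᵢⱼ dZʲ)`. -/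
def darbouxForm (τ : Fin n → Fin n → ℂ) (u w : Fin n → ℂ) : ℝ :=
  ∑ i, ((u i).re * (-(∑ j, τ i j * w j)).re - (w i).re * (-(∑ j, τ i j * u j)).re)

lemma darbouxForm_single_single (τ : Fin n → Fin n → ℂ) (a b : ℂ) (k l : Fin n) :
    darbouxForm τ (Pi.single k a) (Pi.single l b) =
      b.re * (τ l k * a).re - a.re * (τ k l * b).re := by
  simp only [darbouxForm, Pi.single_apply, apply_ite Complex.re, zero_re, mul_ite, ite_mul,
    mul_zero, zero_mul, Finset.sum_ite_eq', Finset.mem_univ, if_true, neg_re, mul_re,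
    Finset.sum_sub_distrib]
  ring

lemma symm_of_darbouxForm_I_mul_eq (τ : Fin n → Fin n → ℂ)
    (h : ∀ u w, darbouxForm τ (fun i => I * u i) (fun i => I * w i) = darbouxForm τ u w)
    (k l : Fin n) : τ k l = τ l k := by
  have I_mul_single : ∀ (m : Fin n) (a : ℂ),
      (fun i => I * (Pi.single m a : Fin n → ℂ) i) = Pi.single m (I * a) :=
    fun m a => funext fun i => by simp [Pi.single_apply]
  have h_re := h (Pi.single k 1) (Pi.single l 1)
  have h_im := h (Pi.single k 1) (Pi.single l I)
  simp only [I_mul_single, darbouxForm_single_single, mul_re, mul_im, I_re, I_im, one_re, one_im]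
    at h_re h_im
  apply Complex.ext <;> linarith

lemma darbouxForm_eq_sum_sum (τ : Fin n → Fin n → ℂ) (u w : Fin n → ℂ) :
    darbouxForm τ u w =
      ∑ i, ∑ j, ((w i).re * (τ i j * u j).re - (u i).re * (τ i j * w j).re) := by
  refine Finset.sum_congr rfl fun i _ => ?_
  rw [Finset.sum_sub_distrib, ← Finset.mul_sum, ← Finset.mul_sum, neg_re, neg_re, re_sum, re_sum]
  ring

lemma darbouxForm_eq_of_symm {τ : Fin n → Fin n → ℂ} (hτ : ∀ i j, τ i j = τ j i)
    (u w : Fin n → ℂ) :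
    (darbouxForm τ u w : ℂ) = I / 2 * ∑ i, ∑ j, ((τ i j).im : ℂ) *
        (u i * (starRingEnd ℂ) (w j) - w i * (starRingEnd ℂ) (u j)) := by
  rw [darbouxForm_eq_sum_sum, ← sub_eq_zero]
  push_cast
  simp only [Finset.mul_sum, ← Finset.sum_sub_distrib]
  refine Finset.sum_sum_eq_zero_of_antisymm _ fun i j => ?_
  rw [hτ j i]
  apply Complex.ext <;>
    simp only [mul_re, mul_im, sub_re, sub_im, ofReal_re, ofReal_im, ofReal_sub, ofReal_mul,
      div_ofNat_re, div_ofNat_im, I_re, I_im, conj_re, conj_im, neg_re, neg_im] <;>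
    ring

lemma exists_local_prepotential {U : Set (Fin n → ℂ)} (hU : IsOpen U)
    {Zl : (Fin n → ℂ) → Fin n → ℂ} {τ : (Fin n → ℂ) → Fin n → Fin n → ℂ}
    (hZl : ∀ z ∈ U, ∀ i, HasFDerivAt (fun w => Zl w i)
      (∑ j, τ z i j • (ContinuousLinearMap.proj j : (Fin n → ℂ) →L[ℂ] ℂ)) z)
    (hτ : ∀ z ∈ U, ∀ i j, τ z i j = τ z j i) {z₀ : Fin n → ℂ} (hz₀ : z₀ ∈ U) :
    ∃ V : Set (Fin n → ℂ), IsOpen V ∧ z₀ ∈ V ∧ V ⊆ U ∧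
      ∃ F : (Fin n → ℂ) → ℂ, ∀ z ∈ V, HasFDerivAt F
        (∑ i, Zl z i • (ContinuousLinearMap.proj i : (Fin n → ℂ) →L[ℂ] ℂ)) z := by
  refine hU.exists_local_primitive_of_hasFDerivAt_symmetric
    (dω := fun z => (∑ i,
      (∑ j, τ z i j • (ContinuousLinearMap.proj j : (Fin n → ℂ) →L[ℂ] ℂ)).smulRight
        (ContinuousLinearMap.proj i : (Fin n → ℂ) →L[ℂ] ℂ)).restrictScalars ℝ)
    (fun z hz => ?_) (fun z hz x y => ?_) hz₀
  · exact (HasFDerivAt.fun_sum fun i _ => (hZl z hz i).smul_const _).restrictScalars ℝ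
  · simp only [ContinuousLinearMap.coe_restrictScalars', sum_apply,
      ContinuousLinearMap.smulRight_apply, smul_apply, ContinuousLinearMap.proj_apply, smul_eq_mul,
      Finset.sum_mul]
    rw [Finset.sum_comm]
    exact Finset.sum_congr rfl fun i _ => Finset.sum_congr rfl fun j _ => by rw [hτ z hz]; ring

end SpecialCoordinates

theorem stmt_3 (n : ℕ)
    (U : Set (Fin n → ℂ)) (hU : IsOpen U)
    (Zl : (Fin n → ℂ) → Fin n → ℂ)
    (τ : (Fin n → ℂ) → Fin n → Fin n → ℂ)
    (hZl : ∀ z ∈ U, ∀ i, HasFDerivAt (fun w => Zl w i)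
      (∑ j, τ z i j • (ContinuousLinearMap.proj j : (Fin n → ℂ) →L[ℂ] ℂ)) z)
    (ω : (Fin n → ℂ) → (Fin n → ℂ) → (Fin n → ℂ) → ℝ)
    (hDarboux : ∀ z ∈ U, ∀ u w, ω z u w =
      ∑ i, ((u i).re * (-(∑ j, τ z i j * w j)).re
        - (w i).re * (-(∑ j, τ z i j * u j)).re))
    (h11 : ∀ z ∈ U, ∀ u w,
      ω z (fun i => Complex.I * u i) (fun i => Complex.I * w i) = ω z u w) :
    (∀ z ∈ U, ∀ i j, τ z i j = τ z j i) ∧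
    (∀ z₀ ∈ U, ∃ V : Set (Fin n → ℂ), IsOpen V ∧ z₀ ∈ V ∧ V ⊆ U ∧
      ∃ F : (Fin n → ℂ) → ℂ, ∀ z ∈ V, HasFDerivAt F
        (∑ i, Zl z i • (ContinuousLinearMap.proj i : (Fin n → ℂ) →L[ℂ] ℂ)) z) ∧
    (∀ z ∈ U, ∀ u w, (ω z u w : ℂ) =
      Complex.I / 2 * ∑ i, ∑ j, ((τ z i j).im : ℂ) *
        (u i * (starRingEnd ℂ) (w j) - w i * (starRingEnd ℂ) (u j))) := by
  have hτ : ∀ z ∈ U, ∀ i j, τ z i j = τ z j i := fun z hz =>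
    symm_of_darbouxForm_I_mul_eq (τ z) fun u w =>
      (hDarboux z hz _ _).symm.trans ((h11 z hz u w).trans (hDarboux z hz u w))
  refine ⟨hτ, fun z₀ hz₀ => exists_local_prepotential hU hZl hτ hz₀, fun z hz u w => ?_⟩
  rw [hDarboux z hz]
  exact darbouxForm_eq_of_symm (hτ z hz) u w
end

section
/- Consider the family of complexified Ehresmann connections 𝒜^ζ on π : TM → M given by 𝒜^ζ_X = h_X − (1/ζ)·v̄_X and 𝒜^ζ_{X̄} = h̄_X + ζ·v_X for X ∈ π*(T^{1,0}M) and ζ ∈ ℂˣ, where h is ℂ-linear and v is ℂ-antilinear with TN⊗ℂ = Im(h) ⊕ Im(h̄) ⊕ Im(v) ⊕ Im(v̄). Then 𝒜^ζ is flat for all ζ ∈ ℂˣ if and only if for all local holomorphic sections X, Y of T^{1,0}M: [h_X, h_Y] = h_{[X,Y]}, [h_X, v̄_Y] + [v̄_X, h_Y] = v̄_{[X,Y]}, [v_X, v_Y] = 0, [h_X, h̄_Y] = [v̄_X, v_Y], and [h_X, v_Y] = 0. -/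
/- Lemma 3.3 (flatlemma), Lie-algebra formulation: L is the (complexified) Lie
algebra of vector fields on TM with real structure σ, g the Lie algebra of
local holomorphic sections of T^{1,0}M, and h, v the horizontal/vertical maps.
The family 𝒜^ζ_X = h_X − ζ⁻¹·σ(v_X), 𝒜^ζ_{X̄} = σ(h_X) + ζ·v_X is flat for all
ζ ∈ ℂˣ iff the five bracket identities hold. -/
theorem stmt_6
    (L : Type*) [LieRing L] [LieAlgebra ℂ L]
    (g : Type*) [LieRing g] [LieAlgebra ℂ g]
    (h v : g → L) (σ : L → L)
    (hσ_add : ∀ a b, σ (a + b) = σ a + σ b)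
    (hσ_smul : ∀ (c : ℂ) (a : L), σ (c • a) = (starRingEnd ℂ) c • σ a)
    (hσ_inv : ∀ a, σ (σ a) = a)
    (hσ_lie : ∀ a b, σ ⁅a, b⁆ = ⁅σ a, σ b⁆) :
    (∀ ζ : ℂ, ζ ≠ 0 →
      (∀ X Y : g,
        ⁅h X - ζ⁻¹ • σ (v X), h Y - ζ⁻¹ • σ (v Y)⁆
          = h ⁅X, Y⁆ - ζ⁻¹ • σ (v ⁅X, Y⁆)) ∧
      (∀ X Y : g,
        ⁅σ (h X) + ζ • v X, σ (h Y) + ζ • v Y⁆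
          = σ (h ⁅X, Y⁆) + ζ • v ⁅X, Y⁆) ∧
      (∀ X Y : g, ⁅h X - ζ⁻¹ • σ (v X), σ (h Y) + ζ • v Y⁆ = 0))
    ↔
    (∀ X Y : g,
      ⁅h X, h Y⁆ = h ⁅X, Y⁆ ∧
      ⁅h X, σ (v Y)⁆ + ⁅σ (v X), h Y⁆ = σ (v ⁅X, Y⁆) ∧
      ⁅v X, v Y⁆ = 0 ∧
      ⁅h X, σ (h Y)⁆ = ⁅σ (v X), v Y⁆ ∧
      ⁅h X, v Y⁆ = 0) := by
  have hσ0 : σ 0 = 0 := by simpa using hσ_smul 0 0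
  constructor
  · intro H X Y
    obtain ⟨A1, B1, C1⟩ := H 1 one_ne_zero
    obtain ⟨A2, B2, C2⟩ := H (-1) (by norm_num)
    obtain ⟨A3, B3, C3⟩ := H 2 two_ne_zero
    have a1 := A1 X Y; have a2 := A2 X Y; have a3 := A3 X Y
    have b1 := B1 X Y; have b2 := B2 X Y; have b3 := B3 X Y
    have c1 := C1 X Y; have c2 := C2 X Y; have c3 := C3 X Y
    simp only [lie_sub, sub_lie, lie_add, add_lie, lie_smul, smul_lie, smul_sub, smul_add,
      smul_smul] at a1 a2 a3 b1 b2 b3 c1 c2 c3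
    refine ⟨?_, ?_, ?_, ?_, ?_⟩
    · linear_combination (norm := module)
        (-(1:ℂ)/2) • a1 + ((1:ℂ)/6) • a2 + ((4:ℂ)/3) • a3
    · linear_combination (norm := module) (-(1:ℂ)/2) • a1 + ((1:ℂ)/2) • a2
    · linear_combination (norm := module)
        (-(1:ℂ)/2) • b1 + ((1:ℂ)/6) • b2 + ((1:ℂ)/3) • b3
    · linear_combination (norm := module) ((1:ℂ)/2) • c1 + ((1:ℂ)/2) • c2
    · linear_combination (norm := module)
        (-(1:ℂ)/2) • c1 + (-(1:ℂ)/6) • c2 + ((2:ℂ)/3) • c3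
  · intro P ζ hζ
    have P1 : ∀ X Y : g, ⁅h X, h Y⁆ = h ⁅X, Y⁆ := fun X Y => (P X Y).1
    have P2 : ∀ X Y : g, ⁅h X, σ (v Y)⁆ + ⁅σ (v X), h Y⁆ = σ (v ⁅X, Y⁆) :=
      fun X Y => (P X Y).2.1
    have P3 : ∀ X Y : g, ⁅v X, v Y⁆ = 0 := fun X Y => (P X Y).2.2.1
    have P4 : ∀ X Y : g, ⁅h X, σ (h Y)⁆ = ⁅σ (v X), v Y⁆ := fun X Y => (P X Y).2.2.2.1
    have P5 : ∀ X Y : g, ⁅h X, v Y⁆ = 0 := fun X Y => (P X Y).2.2.2.2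
    have S1 : ∀ X Y : g, ⁅σ (h X), σ (h Y)⁆ = σ (h ⁅X, Y⁆) := fun X Y => by
      rw [← hσ_lie, P1]
    have S2 : ∀ X Y : g, ⁅σ (h X), v Y⁆ + ⁅v X, σ (h Y)⁆ = v ⁅X, Y⁆ := fun X Y => by
      have := congrArg σ (P2 X Y)
      rwa [hσ_add, hσ_lie, hσ_lie, hσ_inv, hσ_inv, hσ_inv] at this
    have S3 : ∀ X Y : g, ⁅σ (v X), σ (v Y)⁆ = 0 := fun X Y => by
      rw [← hσ_lie, P3, hσ0]
    have S5 : ∀ X Y : g, ⁅σ (v X), σ (h Y)⁆ = 0 := fun X Y => by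
      rw [← hσ_lie]
      have : ⁅v X, h Y⁆ = 0 := by
        rw [← neg_eq_zero, ← lie_skew, P5]; simp
      rw [this, hσ0]
    refine ⟨fun X Y => ?_, fun X Y => ?_, fun X Y => ?_⟩
    · simp only [lie_sub, sub_lie, lie_smul, smul_lie, smul_sub, smul_smul]
      linear_combination (norm := module)
        P1 X Y + (-ζ⁻¹ : ℂ) • P2 X Y + (ζ⁻¹ * ζ⁻¹ : ℂ) • S3 X Y
    · simp only [lie_add, add_lie, lie_smul, smul_lie, smul_add, smul_smul]
      linear_combination (norm := module)
        S1 X Y + (ζ : ℂ) • S2 X Y + (ζ * ζ : ℂ) • P3 X Y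
    · simp only [lie_sub, sub_lie, lie_add, add_lie, lie_smul, smul_lie, smul_sub, smul_add,
        smul_smul, inv_mul_cancel₀ hζ, mul_inv_cancel₀ hζ, one_smul]
      linear_combination (norm := module)
        P4 X Y + (ζ : ℂ) • P5 X Y + (-ζ⁻¹ : ℂ) • S5 X Y
end

section
/- For a special Joyce structure, the 2-form ω₃ on N = TM defined by ω₃(v_X, v̄_Y) = ω₃(h_Y, h̄_X) = −(1/4π²)ω^ν(v_X, v̄_Y) (with all other pairings among h, h̄, v, v̄ zero) satisfies, for local sections X, Y of T^{1,0}M: ω₃(v_X, v̄_Y) = ω(Y, X̄) + ν_X̄(ν_Y(J − J̄)) − {ν_X̄ J, ν_Y J̄}. In holomorphic special coordinates this reads ω₃(v_i, v̄_j) = (i/2)Im(τᵢⱼ) + ν_ī ν_j(J − J̄) − {ν_ī J, ν_j J̄}. -/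
/- Lemma 3.15 (keyexp), fibrewise coordinate formulation: with
ν_i = ½(∂/∂φⁱ − τᵢⱼ∂/∂φ_j), ν_ī = ½(∂/∂φⁱ − τ̄ᵢⱼ∂/∂φ_j),
v_i = 2πi(ν_ī + Ham_{ν_ī J}) and ω₃(v_X, v̄_Y) := −(1/4π²)ω^ν(v_X, v̄_Y),
one has ω₃(v_i, v̄_j) = (i/2)Im τᵢⱼ + ν_ī ν_j(J − J̄) − {ν_ī J, ν_j J̄}. -/

/-- ∂/∂φⁱ (complex-valued functions). -/
noncomputable def pdA {n : ℕ} (i : Fin n) (f : (Fin n → ℝ) × (Fin n → ℝ) → ℂ)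
    (x : (Fin n → ℝ) × (Fin n → ℝ)) : ℂ :=
  fderiv ℝ f x (Pi.single i 1, 0)

/-- ∂/∂φ_i (complex-valued functions). -/
noncomputable def pdB {n : ℕ} (i : Fin n) (f : (Fin n → ℝ) × (Fin n → ℝ) → ℂ)
    (x : (Fin n → ℝ) × (Fin n → ℝ)) : ℂ :=
  fderiv ℝ f x (0, Pi.single i 1)

/-- holomorphic ν_i f = ½(∂f/∂φⁱ − Σⱼ τᵢⱼ ∂f/∂φ_j). -/
noncomputable def nuhol {n : ℕ} (τ : Fin n → Fin n → ℂ) (i : Fin n)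
    (f : (Fin n → ℝ) × (Fin n → ℝ) → ℂ) (x : (Fin n → ℝ) × (Fin n → ℝ)) : ℂ :=
  (1 / 2 : ℂ) * (pdA i f x - ∑ j, τ i j * pdB j f x)

/-- ν_ī f = ½(∂f/∂φⁱ − Σⱼ τ̄ᵢⱼ ∂f/∂φ_j). -/
noncomputable def nubar {n : ℕ} (τ : Fin n → Fin n → ℂ) (i : Fin n)
    (f : (Fin n → ℝ) × (Fin n → ℝ) → ℂ) (x : (Fin n → ℝ) × (Fin n → ℝ)) : ℂ :=
  (1 / 2 : ℂ) * (pdA i f x - ∑ j, (starRingEnd ℂ) (τ i j) * pdB j f x)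

/-- Complexified Hamiltonian vector field with respect to ω^ν = dφⁱ ∧ dφ_i. -/
noncomputable def HamC {n : ℕ} (f : (Fin n → ℝ) × (Fin n → ℝ) → ℂ)
    (x : (Fin n → ℝ) × (Fin n → ℝ)) : (Fin n → ℂ) × (Fin n → ℂ) :=
  (fun i => -(pdB i f x), fun i => pdA i f x)

/-- Complexified Poisson bracket with respect to ω^ν. -/
noncomputable def pbC {n : ℕ} (f g : (Fin n → ℝ) × (Fin n → ℝ) → ℂ)
    (x : (Fin n → ℝ) × (Fin n → ℝ)) : ℂ :=
  ∑ i, (pdA i f x * pdB i g x - pdB i f x * pdA i g x)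

/-- Complex bilinear extension of ω^ν. -/
noncomputable def omC {n : ℕ} (u w : (Fin n → ℂ) × (Fin n → ℂ)) : ℂ :=
  ∑ i, (u.1 i * w.2 i - u.2 i * w.1 i)

/-- v_i = 2πi(ν_ī + Ham_{ν_ī J}). -/
noncomputable def vfield {n : ℕ} (τ : Fin n → Fin n → ℂ)
    (J : (Fin n → ℝ) × (Fin n → ℝ) → ℂ) (i : Fin n)
    (x : (Fin n → ℝ) × (Fin n → ℝ)) : (Fin n → ℂ) × (Fin n → ℂ) :=
  (2 * (Real.pi : ℂ) * Complex.I) •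
    (((fun k => if k = i then (1 / 2 : ℂ) else 0),
      (fun j => -(1 / 2 : ℂ) * (starRingEnd ℂ) (τ i j)))
      + HamC (nubar τ i J) x)

/-- Componentwise conjugate of a complexified vertical vector. -/
noncomputable def conjV {n : ℕ} (u : (Fin n → ℂ) × (Fin n → ℂ)) :
    (Fin n → ℂ) × (Fin n → ℂ) :=
  (fun i => (starRingEnd ℂ) (u.1 i), fun i => (starRingEnd ℂ) (u.2 i))



section KeyexpAux

open Complex Finset

variable {n : ℕ}

/-- basis direction ∂/∂φⁱ -/
def uA (i : Fin n) : (Fin n → ℝ) × (Fin n → ℝ) := (Pi.single i 1, 0)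
/-- basis direction ∂/∂φ_i -/
def uB (i : Fin n) : (Fin n → ℝ) × (Fin n → ℝ) := (0, Pi.single i 1)

lemma pdA_eq (i : Fin n) (f : (Fin n → ℝ) × (Fin n → ℝ) → ℂ) (x) :
    pdA i f x = fderiv ℝ f x (uA i) := rfl

lemma pdB_eq (i : Fin n) (f : (Fin n → ℝ) × (Fin n → ℝ) → ℂ) (x) :
    pdB i f x = fderiv ℝ f x (uB i) := rfl

lemma pd_smooth {f : (Fin n → ℝ) × (Fin n → ℝ) → ℂ} (hf : ContDiff ℝ (⊤ : ℕ∞) f) (v) :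
    ContDiff ℝ (⊤ : ℕ∞) fun x => fderiv ℝ f x v :=
  (hf.fderiv_right (by simp)).clm_apply contDiff_const

lemma pd_diff {f : (Fin n → ℝ) × (Fin n → ℝ) → ℂ} (hf : ContDiff ℝ (⊤ : ℕ∞) f) (v x) :
    DifferentiableAt ℝ (fun y => fderiv ℝ f y v) x :=
  ((pd_smooth hf v).differentiable (by simp)).differentiableAt

lemma pd_conj (f : (Fin n → ℝ) × (Fin n → ℝ) → ℂ) (x v) :
    fderiv ℝ (fun z => (starRingEnd ℂ) (f z)) x v = (starRingEnd ℂ) (fderiv ℝ f x v) := by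
  have h : (fun z => (starRingEnd ℂ) (f z)) = (Complex.conjCLE : ℂ ≃L[ℝ] ℂ) ∘ f := by
    funext z; simp [Complex.conjCLE_apply]
  rw [h, ContinuousLinearEquiv.comp_fderiv]
  simp [Complex.conjCLE_apply]

lemma conj_smooth {f : (Fin n → ℝ) × (Fin n → ℝ) → ℂ} (hf : ContDiff ℝ (⊤ : ℕ∞) f) :
    ContDiff ℝ (⊤ : ℕ∞) fun z => (starRingEnd ℂ) (f z) := by
  have h : (fun z => (starRingEnd ℂ) (f z)) = (Complex.conjCLE : ℂ ≃L[ℝ] ℂ) ∘ f := by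
    funext z; simp [Complex.conjCLE_apply]
  rw [h]
  exact (Complex.conjCLE : ℂ ≃L[ℝ] ℂ).contDiff.comp hf

lemma pd_swap {f : (Fin n → ℝ) × (Fin n → ℝ) → ℂ} (hf : ContDiff ℝ (⊤ : ℕ∞) f) (x u v) :
    fderiv ℝ (fun y => fderiv ℝ f y v) x u = fderiv ℝ (fun y => fderiv ℝ f y u) x v := by
  have hd : DifferentiableAt ℝ (fderiv ℝ f) x :=
    ((hf.fderiv_right (m := 1) (WithTop.coe_le_coe.mpr le_top)).differentiable (by simp)).differentiableAt
  have h1 : ∀ (w u' : (Fin n → ℝ) × (Fin n → ℝ)),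
      fderiv ℝ (fun y => fderiv ℝ f y w) x u' = fderiv ℝ (fderiv ℝ f) x u' w := by
    intro w u'
    have h : (fun y => fderiv ℝ f y w) = (ContinuousLinearMap.apply ℝ ℂ w) ∘ (fderiv ℝ f) := rfl
    rw [h, fderiv_comp x (ContinuousLinearMap.apply ℝ ℂ w).differentiableAt hd]
    simp
  rw [h1, h1]
  exact (hf.contDiffAt.isSymmSndFDerivAt (by rw [minSmoothness_of_isRCLikeNormedField]; exact WithTop.coe_le_coe.mpr le_top)) u v

lemma fderiv_nug {f : (Fin n → ℝ) × (Fin n → ℝ) → ℂ} (hf : ContDiff ℝ (⊤ : ℕ∞) f)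
    (u : (Fin n → ℝ) × (Fin n → ℝ)) (c : Fin n → ℂ) (x v) :
    fderiv ℝ (fun y => (1/2 : ℂ) * (fderiv ℝ f y u - ∑ k, c k * fderiv ℝ f y (uB k))) x v
      = (1/2 : ℂ) * (fderiv ℝ (fun y => fderiv ℝ f y u) x v
          - ∑ k, c k * fderiv ℝ (fun y => fderiv ℝ f y (uB k)) x v) := by
  have hds : DifferentiableAt ℝ (fun y => ∑ k, c k * fderiv ℝ f y (uB k)) x :=
    DifferentiableAt.fun_sum fun k _ => (pd_diff hf (uB k) x).const_mul (c k)
  have h2 : ∀ k : Fin n, fderiv ℝ (fun y => c k * fderiv ℝ f y (uB k)) x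
      = c k • fderiv ℝ (fun y => fderiv ℝ f y (uB k)) x :=
    fun k => fderiv_const_mul (pd_diff hf (uB k) x) _
  rw [fderiv_const_mul ((pd_diff hf u x).fun_sub hds), fderiv_fun_sub (pd_diff hf u x) hds,
    fderiv_fun_sum (fun k _ => (pd_diff hf (uB k) x).const_mul (c k))]
  simp only [h2, ContinuousLinearMap.smul_apply, ContinuousLinearMap.sub_apply,
    ContinuousLinearMap.coe_sum', Finset.sum_apply, smul_eq_mul]

lemma key_expand (c c' g2 g3 : Fin n → ℂ) (g1 : ℂ) (g4 : Fin n → Fin n → ℂ) :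
    (1/2 : ℂ) * ((1/2 : ℂ) * (g1 - ∑ k, c' k * g2 k)
        - ∑ k, c k * ((1/2 : ℂ) * (g3 k - ∑ l, c' l * g4 k l)))
      = (1/4 : ℂ) * g1 - (1/4 : ℂ) * (∑ k, c' k * g2 k)
        - (1/4 : ℂ) * (∑ k, c k * g3 k)
        + (1/4 : ℂ) * ∑ k, ∑ l, c k * (c' l * g4 k l) := by
  have h : ∑ k, c k * ((1/2 : ℂ) * (g3 k - ∑ l, c' l * g4 k l))
      = (1/2 : ℂ) * ∑ k, c k * g3 k - (1/2 : ℂ) * ∑ k, ∑ l, c k * (c' l * g4 k l) := by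
    rw [Finset.mul_sum, Finset.mul_sum, ← Finset.sum_sub_distrib]
    refine Finset.sum_congr rfl fun k _ => ?_
    rw [← Finset.mul_sum]
    ring
  rw [h]; ring

lemma nu_comm (τ : Fin n → Fin n → ℂ) {f : (Fin n → ℝ) × (Fin n → ℝ) → ℂ}
    (hf : ContDiff ℝ (⊤ : ℕ∞) f) (i j : Fin n) (x) :
    nuhol τ j (fun y => nubar τ i f y) x = nubar τ i (fun y => nuhol τ j f y) x := by
  have hN1 : ∀ v, fderiv ℝ (fun y => nubar τ i f y) x v
      = (1/2 : ℂ) * (fderiv ℝ (fun y => fderiv ℝ f y (uA i)) x v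
          - ∑ k, (starRingEnd ℂ) (τ i k) * fderiv ℝ (fun y => fderiv ℝ f y (uB k)) x v) :=
    fun v => fderiv_nug hf (uA i) (fun k => (starRingEnd ℂ) (τ i k)) x v
  have hN2 : ∀ v, fderiv ℝ (fun y => nuhol τ j f y) x v
      = (1/2 : ℂ) * (fderiv ℝ (fun y => fderiv ℝ f y (uA j)) x v
          - ∑ k, τ j k * fderiv ℝ (fun y => fderiv ℝ f y (uB k)) x v) :=
    fun v => fderiv_nug hf (uA j) (τ j) x v
  show (1/2 : ℂ) * (fderiv ℝ (fun y => nubar τ i f y) x (uA j)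
      - ∑ k, τ j k * fderiv ℝ (fun y => nubar τ i f y) x (uB k))
    = (1/2 : ℂ) * (fderiv ℝ (fun y => nuhol τ j f y) x (uA i)
      - ∑ k, (starRingEnd ℂ) (τ i k) * fderiv ℝ (fun y => nuhol τ j f y) x (uB k))
  simp only [hN1, hN2]
  have L := key_expand (τ j) (fun k => (starRingEnd ℂ) (τ i k))
    (fun k => fderiv ℝ (fun y => fderiv ℝ f y (uB k)) x (uA j))
    (fun k => fderiv ℝ (fun y => fderiv ℝ f y (uA i)) x (uB k))
    (fderiv ℝ (fun y => fderiv ℝ f y (uA i)) x (uA j))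
    (fun k l => fderiv ℝ (fun y => fderiv ℝ f y (uB l)) x (uB k))
  have R := key_expand (fun k => (starRingEnd ℂ) (τ i k)) (τ j)
    (fun k => fderiv ℝ (fun y => fderiv ℝ f y (uB k)) x (uA i))
    (fun k => fderiv ℝ (fun y => fderiv ℝ f y (uA j)) x (uB k))
    (fderiv ℝ (fun y => fderiv ℝ f y (uA j)) x (uA i))
    (fun k l => fderiv ℝ (fun y => fderiv ℝ f y (uB l)) x (uB k))
  rw [L, R]
  have e1 : fderiv ℝ (fun y => fderiv ℝ f y (uA i)) x (uA j)
      = fderiv ℝ (fun y => fderiv ℝ f y (uA j)) x (uA i) := pd_swap hf x (uA j) (uA i)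
  have e2 : ∑ k, (starRingEnd ℂ) (τ i k) * fderiv ℝ (fun y => fderiv ℝ f y (uB k)) x (uA j)
      = ∑ k, (starRingEnd ℂ) (τ i k) * fderiv ℝ (fun y => fderiv ℝ f y (uA j)) x (uB k) :=
    Finset.sum_congr rfl fun k _ => by rw [pd_swap hf x (uA j) (uB k)]
  have e3 : ∑ k, τ j k * fderiv ℝ (fun y => fderiv ℝ f y (uA i)) x (uB k)
      = ∑ k, τ j k * fderiv ℝ (fun y => fderiv ℝ f y (uB k)) x (uA i) :=
    Finset.sum_congr rfl fun k _ => by rw [pd_swap hf x (uB k) (uA i)]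
  have e4 : ∑ k, ∑ l, τ j k * ((starRingEnd ℂ) (τ i l)
        * fderiv ℝ (fun y => fderiv ℝ f y (uB l)) x (uB k))
      = ∑ k, ∑ l, (starRingEnd ℂ) (τ i k) * (τ j l
        * fderiv ℝ (fun y => fderiv ℝ f y (uB l)) x (uB k)) := by
    rw [Finset.sum_comm]
    refine Finset.sum_congr rfl fun k _ => Finset.sum_congr rfl fun l _ => ?_
    rw [pd_swap hf x (uB l) (uB k)]
    ring
  rw [e1, e2, e3, e4]
  ring

lemma final_sum (c c' PA PB QA QB : Fin n → ℂ) (i j : Fin n) :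
    -∑ k, (((if k = i then (1/2 : ℂ) else 0) - PB k) * (-(1/2 : ℂ) * c k + QA k)
        - (-(1/2 : ℂ) * c' k + PA k) * ((if k = j then (1/2 : ℂ) else 0) - QB k))
      = (c i - c' j)/4
        + ((1/2 : ℂ) * (PA j - ∑ k, c k * PB k)
          - (1/2 : ℂ) * (QA i - ∑ k, c' k * QB k))
        - ∑ k, (PA k * QB k - PB k * QA k) := by
  simp only [sub_mul, mul_sub, add_mul, mul_add, ite_mul, mul_ite, zero_mul, mul_zero,
    neg_mul, mul_neg, neg_neg, neg_sub, Finset.sum_sub_distrib, Finset.sum_add_distrib,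
    Finset.sum_ite_eq, Finset.sum_ite_eq', Finset.mem_univ, if_true, Finset.mul_sum]
  ring_nf
  rw [show ∑ x, c' x * QB x * (-1 / 2) = -∑ x, c' x * QB x * (1 / 2) from by
    rw [← Finset.sum_neg_distrib]; exact Finset.sum_congr rfl fun k _ => by ring]
  rw [show ∑ x, PB x * c x * (1 / 2) = ∑ x, c x * PB x * (1 / 2) from
    Finset.sum_congr rfl fun k _ => by ring]
  ring

end KeyexpAux

theorem stmt_10 {n : ℕ} (τ : Fin n → Fin n → ℂ)
    (hτ : ∀ i j, τ i j = τ j i)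
    (J : (Fin n → ℝ) × (Fin n → ℝ) → ℂ)
    (hJ : ContDiff ℝ (⊤ : ℕ∞) J) :
    ∀ (i j : Fin n) (x : (Fin n → ℝ) × (Fin n → ℝ)),
      -(1 / (4 * (Real.pi : ℂ) ^ 2)) * omC (vfield τ J i x) (conjV (vfield τ J j x))
        = Complex.I / 2 * ((τ i j).im : ℂ)
          + nubar τ i (fun y => nuhol τ j (fun z => J z - (starRingEnd ℂ) (J z)) y) x
          - pbC (nubar τ i J) (nuhol τ j (fun z => (starRingEnd ℂ) (J z))) x :=  by
  classical
  intro i j x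
  have hJc : ContDiff ℝ (⊤ : ℕ∞) fun z => (starRingEnd ℂ) (J z) := conj_smooth hJ
  have hJd : ∀ y, DifferentiableAt ℝ J y := fun y => (hJ.differentiable (by simp)).differentiableAt
  have hJcd : ∀ y, DifferentiableAt ℝ (fun z => (starRingEnd ℂ) (J z)) y :=
    fun y => (hJc.differentiable (by simp)).differentiableAt
  have hbc : ∀ y, (starRingEnd ℂ) (nubar τ j J y)
      = nuhol τ j (fun z => (starRingEnd ℂ) (J z)) y := by
    intro y
    simp only [nubar, nuhol, pdA, pdB, map_mul, map_sub, map_sum, map_div₀, map_one, map_ofNat,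
      Complex.conj_conj, pd_conj]
  have hA : ∀ k, (starRingEnd ℂ) (pdA k (nubar τ j J) x)
      = pdA k (fun y => nuhol τ j (fun z => (starRingEnd ℂ) (J z)) y) x := by
    intro k
    rw [show (fun y => nuhol τ j (fun z => (starRingEnd ℂ) (J z)) y)
        = fun y => (starRingEnd ℂ) (nubar τ j J y) from funext fun y => (hbc y).symm]
    rw [pdA_eq, pdA_eq, pd_conj]
  have hB : ∀ k, (starRingEnd ℂ) (pdB k (nubar τ j J) x)
      = pdB k (fun y => nuhol τ j (fun z => (starRingEnd ℂ) (J z)) y) x := by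
    intro k
    rw [show (fun y => nuhol τ j (fun z => (starRingEnd ℂ) (J z)) y)
        = fun y => (starRingEnd ℂ) (nubar τ j J y) from funext fun y => (hbc y).symm]
    rw [pdB_eq, pdB_eq, pd_conj]
  have hsm : ∀ (g : (Fin n → ℝ) × (Fin n → ℝ) → ℂ), ContDiff ℝ (⊤ : ℕ∞) g → ∀ (c : Fin n → ℂ)
      (u : (Fin n → ℝ) × (Fin n → ℝ)),
      ContDiff ℝ (⊤ : ℕ∞) (fun y => (1/2 : ℂ) * (fderiv ℝ g y u - ∑ k, c k * fderiv ℝ g y (uB k))) :=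
    fun g hg c u => contDiff_const.mul ((pd_smooth hg u).sub
      (ContDiff.sum fun k _ => contDiff_const.mul (pd_smooth hg (uB k))))
  have hnuJ : ContDiff ℝ (⊤ : ℕ∞) (fun y => nuhol τ j J y) := hsm J hJ (τ j) (uA j)
  have hnuC : ContDiff ℝ (⊤ : ℕ∞) (fun y => nuhol τ j (fun z => (starRingEnd ℂ) (J z)) y) :=
    hsm _ hJc (τ j) (uA j)
  have hsplit : (fun y => nuhol τ j (fun z => J z - (starRingEnd ℂ) (J z)) y)
      = fun y => nuhol τ j J y - nuhol τ j (fun z => (starRingEnd ℂ) (J z)) y := by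
    funext y
    simp only [nuhol, pdA, pdB]
    rw [fderiv_fun_sub (hJd y) (hJcd y)]
    simp only [ContinuousLinearMap.sub_apply, mul_sub, Finset.sum_sub_distrib]
    ring
  have hRHS1 : nubar τ i (fun y => nuhol τ j (fun z => J z - (starRingEnd ℂ) (J z)) y) x
      = nubar τ i (fun y => nuhol τ j J y) x
        - nubar τ i (fun y => nuhol τ j (fun z => (starRingEnd ℂ) (J z)) y) x := by
    rw [hsplit]
    simp only [nubar, pdA, pdB]
    rw [fderiv_fun_sub ((hnuJ.differentiable (by simp)) x) ((hnuC.differentiable (by simp)) x)]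
    simp only [ContinuousLinearMap.sub_apply, mul_sub, Finset.sum_sub_distrib]
    ring
  have hcomm : nubar τ i (fun y => nuhol τ j J y) x
      = nuhol τ j (fun y => nubar τ i J y) x := (nu_comm τ hJ i j x).symm
  have him : Complex.I / 2 * ((τ i j).im : ℂ)
      = (τ j i - (starRingEnd ℂ) (τ i j)) / 4 := by
    rw [← hτ i j, Complex.sub_conj]
    push_cast
    ring
  have hterm : ∀ k, (vfield τ J i x).1 k * (conjV (vfield τ J j x)).2 k
        - (vfield τ J i x).2 k * (conjV (vfield τ J j x)).1 k
      = (4 * (Real.pi : ℂ)^2) *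
        (((if k = i then (1/2 : ℂ) else 0) - pdB k (nubar τ i J) x)
            * (-(1/2 : ℂ) * τ j k
              + pdA k (fun y => nuhol τ j (fun z => (starRingEnd ℂ) (J z)) y) x)
          - (-(1/2 : ℂ) * (starRingEnd ℂ) (τ i k) + pdA k (nubar τ i J) x)
            * ((if k = j then (1/2 : ℂ) else 0)
              - pdB k (fun y => nuhol τ j (fun z => (starRingEnd ℂ) (J z)) y) x)) := by
    intro k
    simp only [vfield, HamC, conjV, Prod.smul_fst, Prod.smul_snd, Prod.fst_add, Prod.snd_add,
      Pi.smul_apply, Pi.add_apply, smul_eq_mul, map_mul, map_add, map_neg, map_ofNat,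
      Complex.conj_I, Complex.conj_ofReal, Complex.conj_conj, map_div₀, map_one,
      apply_ite (starRingEnd ℂ), map_zero, hA, hB]
    ring_nf
    simp only [Complex.I_sq]
    ring
  have homC : omC (vfield τ J i x) (conjV (vfield τ J j x))
      = (4 * (Real.pi : ℂ)^2) * ∑ k,
        (((if k = i then (1/2 : ℂ) else 0) - pdB k (nubar τ i J) x)
            * (-(1/2 : ℂ) * τ j k
              + pdA k (fun y => nuhol τ j (fun z => (starRingEnd ℂ) (J z)) y) x)
          - (-(1/2 : ℂ) * (starRingEnd ℂ) (τ i k) + pdA k (nubar τ i J) x)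
            * ((if k = j then (1/2 : ℂ) else 0)
              - pdB k (fun y => nuhol τ j (fun z => (starRingEnd ℂ) (J z)) y) x)) := by
    simp only [omC]
    rw [Finset.mul_sum]
    exact Finset.sum_congr rfl fun k _ => hterm k
  have h4 : (4 * (Real.pi : ℂ)^2) ≠ 0 :=
    mul_ne_zero (by norm_num)
      (pow_ne_zero _ (Complex.ofReal_ne_zero.mpr Real.pi_ne_zero))
  rw [homC, hRHS1, hcomm, him]
  have hneg : -(1 / (4 * (Real.pi : ℂ)^2)) * ((4 * (Real.pi : ℂ)^2) * (∑ k,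
        (((if k = i then (1/2 : ℂ) else 0) - pdB k (nubar τ i J) x)
            * (-(1/2 : ℂ) * τ j k
              + pdA k (fun y => nuhol τ j (fun z => (starRingEnd ℂ) (J z)) y) x)
          - (-(1/2 : ℂ) * (starRingEnd ℂ) (τ i k) + pdA k (nubar τ i J) x)
            * ((if k = j then (1/2 : ℂ) else 0)
              - pdB k (fun y => nuhol τ j (fun z => (starRingEnd ℂ) (J z)) y) x))))
      = -∑ k,
        (((if k = i then (1/2 : ℂ) else 0) - pdB k (nubar τ i J) x)
            * (-(1/2 : ℂ) * τ j k
              + pdA k (fun y => nuhol τ j (fun z => (starRingEnd ℂ) (J z)) y) x)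
          - (-(1/2 : ℂ) * (starRingEnd ℂ) (τ i k) + pdA k (nubar τ i J) x)
            * ((if k = j then (1/2 : ℂ) else 0)
              - pdB k (fun y => nuhol τ j (fun z => (starRingEnd ℂ) (J z)) y) x))
    := by
      rw [neg_mul, neg_inj, ← mul_assoc, one_div_mul_cancel h4, one_mul]
  rw [hneg]
  exact final_sum (τ j) (fun k => (starRingEnd ℂ) (τ i k))
    (fun k => pdA k (nubar τ i J) x) (fun k => pdB k (nubar τ i J) x)
    (fun k => pdA k (fun y => nuhol τ j (fun z => (starRingEnd ℂ) (J z)) y) x)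
    (fun k => pdB k (fun y => nuhol τ j (fun z => (starRingEnd ℂ) (J z)) y) x) i j
end

section
/- Let g(·,·) := ω₃(·, I₃·) where ω₃ is the real nondegenerate 2-form of a special Joyce structure and I₃ the complex structure with (1,0)-space spanned by h_X, v_X. If ω₃ is preserved by I₃, pairs Im(h) with Im(h̄) and Im(v) with Im(v̄), and vanishes on mixed h-v pairings, and I₁ is defined by I₁(h_X) = v̄_X, I₁(v_X) = −h̄_X, then g is a pseudo-Riemannian metric preserved by I₁, I₂ = I₃I₁, and I₃; i.e., (g, I₁, I₂, I₃) is an almost hyperhermitian structure. -/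
/- Proposition 3.13 (hyperhermitianstr), pointwise linear-algebra formulation
on the complexified tangent space E with real structure σ and frame
h i, σ(h i), v i, σ(v i): with g(·,·) := ω₃(·, I₃·), the form g is symmetric
and nondegenerate (a pseudo-Riemannian metric) and is preserved by I₁,
I₂ = I₃∘I₁ and I₃, i.e. (g, I₁, I₂, I₃) is almost hyperhermitian. -/
theorem stmt_11
    (E : Type*) [AddCommGroup E] [Module ℝ E] [Module ℂ E] [IsScalarTower ℝ ℂ E]
    (ι : Type*)
    (σ : E →ₗ[ℝ] E)
    (hσ_inv : ∀ x, σ (σ x) = x)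
    (hσ_smul : ∀ (c : ℂ) (x : E), σ (c • x) = (starRingEnd ℂ) c • σ x)
    (h v : ι → E)
    (hspan : Submodule.span ℂ
      (Set.range h ∪ Set.range (σ ∘ h) ∪ Set.range v ∪ Set.range (σ ∘ v)) = ⊤)
    (I1 I3 : E →ₗ[ℂ] E)
    (hreal1 : ∀ x, I1 (σ x) = σ (I1 x))
    (hreal3 : ∀ x, I3 (σ x) = σ (I3 x))
    (hI3h : ∀ i, I3 (h i) = Complex.I • h i)
    (hI3v : ∀ i, I3 (v i) = Complex.I • v i)
    (hI1h : ∀ i, I1 (h i) = σ (v i))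
    (hI1v : ∀ i, I1 (v i) = -(σ (h i)))
    (ω3 : E →ₗ[ℂ] E →ₗ[ℂ] ℂ)
    (halt : ∀ u w, ω3 u w = -(ω3 w u))
    (hreal : ∀ u w, ω3 (σ u) (σ w) = (starRingEnd ℂ) (ω3 u w))
    (hI3inv : ∀ u w, ω3 (I3 u) (I3 w) = ω3 u w)
    (hnd : ∀ u, (∀ w, ω3 u w = 0) → u = 0)
    -- ω₃ pairs Im(v) with Im(v̄) and Im(h) with Im(h̄); all mixed pairings vanish
    (hrel : ∀ i j, ω3 (v i) (σ (v j)) = ω3 (h j) (σ (h i)))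
    (hhv : ∀ i j, ω3 (h i) (v j) = 0)
    (hhvb : ∀ i j, ω3 (h i) (σ (v j)) = 0)
    (hvhb : ∀ i j, ω3 (v i) (σ (h j)) = 0)
    (hhh : ∀ i j, ω3 (h i) (h j) = 0)
    (hvv : ∀ i j, ω3 (v i) (v j) = 0) :
    -- g(u,w) := ω3(u, I3 w) is symmetric, nondegenerate, and invariant under
    -- I₁, I₂ = I₃∘I₁, I₃
    (∀ u w, ω3 u (I3 w) = ω3 w (I3 u)) ∧
    (∀ u, (∀ w, ω3 u (I3 w) = 0) → u = 0) ∧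
    (∀ u w, ω3 (I1 u) (I3 (I1 w)) = ω3 u (I3 w)) ∧
    (∀ u w, ω3 ((I3 ∘ₗ I1) u) (I3 ((I3 ∘ₗ I1) w)) = ω3 u (I3 w)) ∧
    (∀ u w, ω3 (I3 u) (I3 (I3 w)) = ω3 u (I3 w)) := by
  -- actions on conjugate generators
  have hI3σh : ∀ i, I3 (σ (h i)) = -(Complex.I • σ (h i)) := by
    intro i; rw [hreal3, hI3h, hσ_smul]; simp [Complex.conj_I]
  have hI3σv : ∀ i, I3 (σ (v i)) = -(Complex.I • σ (v i)) := by
    intro i; rw [hreal3, hI3v, hσ_smul]; simp [Complex.conj_I]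
  have hI1σh : ∀ i, I1 (σ (h i)) = v i := by
    intro i; rw [hreal1, hI1h, hσ_inv]
  have hI1σv : ∀ i, I1 (σ (v i)) = -(h i) := by
    intro i; rw [hreal1, hI1v, map_neg, hσ_inv]
  -- I3 squared = -1
  have I3sq : ∀ x, I3 (I3 x) = -x := by
    have : I3 ∘ₗ I3 = -LinearMap.id := by
      apply LinearMap.ext_on hspan
      rintro x (((⟨i, rfl⟩ | ⟨i, rfl⟩) | ⟨i, rfl⟩) | ⟨i, rfl⟩) <;>
        simp [hI3h, hI3v, hI3σh, hI3σv, smul_smul, Complex.I_mul_I]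
    intro x
    simpa using LinearMap.ext_iff.1 this x
  -- derived ω3 values on conjugate generators
  have Fσhh : ∀ i j, ω3 (σ (h i)) (h j) = (starRingEnd ℂ) (ω3 (h i) (σ (h j))) := by
    intro i j; rw [← hreal, hσ_inv]
  have Fσvv : ∀ i j, ω3 (σ (v i)) (v j) = (starRingEnd ℂ) (ω3 (h j) (σ (h i))) := by
    intro i j; rw [← hrel, ← hreal, hσ_inv]
  have Fskew : ∀ i j, ω3 (h j) (σ (h i)) = -((starRingEnd ℂ) (ω3 (h i) (σ (h j)))) := by
    intro i j; rw [halt, Fσhh]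
  have Fσhσh : ∀ i j, ω3 (σ (h i)) (σ (h j)) = 0 := by
    intro i j; rw [hreal, hhh, map_zero]
  have Fσvσv : ∀ i j, ω3 (σ (v i)) (σ (v j)) = 0 := by
    intro i j; rw [hreal, hvv, map_zero]
  have Fσhσv : ∀ i j, ω3 (σ (h i)) (σ (v j)) = 0 := by
    intro i j; rw [hreal, hhv, map_zero]
  have Fσvσh : ∀ i j, ω3 (σ (v i)) (σ (h j)) = 0 := by
    intro i j; rw [halt, Fσhσv, neg_zero]
  have Fvh : ∀ i j, ω3 (v i) (h j) = 0 := by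
    intro i j; rw [halt, hhv, neg_zero]
  have Fσvh : ∀ i j, ω3 (σ (v i)) (h j) = 0 := by
    intro i j; rw [halt, hhvb, neg_zero]
  have Fσhv : ∀ i j, ω3 (σ (h i)) (v j) = 0 := by
    intro i j; rw [halt, hvhb, neg_zero]
  have hg1 : ∀ u w, ω3 (I1 u) (I3 (I1 w)) = ω3 u (I3 w) := by
    have key : ((ω3.compl₂ (I3 ∘ₗ I1)).comp I1) = ω3.compl₂ I3 := by
      apply LinearMap.ext_on hspan
      rintro x (((⟨i, rfl⟩ | ⟨i, rfl⟩) | ⟨i, rfl⟩) | ⟨i, rfl⟩) <;>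
      · apply LinearMap.ext_on hspan
        rintro y (((⟨j, rfl⟩ | ⟨j, rfl⟩) | ⟨j, rfl⟩) | ⟨j, rfl⟩) <;>
          simp [LinearMap.compl₂_apply, hI1h, hI1v, hI1σh, hI1σv, hI3h, hI3v,
            hI3σh, hI3σv, hhh, hvv, hhv, hhvb, hvhb, Fσhh, Fσvv, Fσhσh, Fσvσv,
            Fσhσv, Fσvσh, Fvh, Fσvh, Fσhv, hrel] <;>
          first
            | linear_combination Complex.I * Fskew j i
            | linear_combination -Complex.I * Fskew i j
            | linear_combination Complex.I * Fskew i j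
            | linear_combination -Complex.I * Fskew j i
    intro u w
    have := LinearMap.ext_iff.1 (LinearMap.ext_iff.1 key u) w
    simpa using this
  refine ⟨?_, ?_, hg1, ?_, ?_⟩
  · intro u w
    rw [← hI3inv u (I3 w), I3sq, map_neg]
    exact (halt w (I3 u)).symm
  · intro u hu
    apply hnd
    intro w
    have := hu (I3 (-w))
    rwa [I3sq, neg_neg] at this
  · intro u w
    simp only [LinearMap.comp_apply]
    rw [hI3inv (I1 u) (I3 (I1 w))]
    exact hg1 u w
  · intro u w
    exact hI3inv u (I3 w)
end

section
/- For each γ with Z_γ ∈ ℂˣ and real φ_γ, the integral (1/4πi)·∫_{l_γ} (dζ/ζ)·Li₂(𝒳_γ(ζ)) over the ray l_γ = {ζ : Z_γ/ζ ∈ ℝ_{<0}}, with 𝒳_γ(ζ) = exp(πZ_γ/ζ + iφ_γ + πζZ̄_γ), equals (1/2πi)·Σ_{n>0} (e^{inφ_γ}/n²)·K₀(2πn|Z_γ|), where Li₂ is the dilogarithm and K₀ the modified Bessel function of the second kind. -/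
/- Proposition of Appendix B (instgenapp): for Z_γ ≠ 0 and φ_γ ∈ ℝ,
(1/4πi)∫_{l_γ}(dζ/ζ)Li₂(𝒳_γ(ζ)) = (1/2πi)Σ_{n>0}(e^{inφ_γ}/n²)K₀(2πn|Z_γ|),
where 𝒳_γ(ζ) = exp(πZ_γ/ζ + iφ_γ + πζZ̄_γ) and the ray l_γ = {ζ : Z_γ/ζ ∈ ℝ_{<0}}
is parametrized by ζ = −s·Z_γ/|Z_γ|, s > 0 (so that dζ/ζ = ds/s). -/

/-- Modified Bessel function K₀ (integral representation). -/
noncomputable def K0 (x : ℝ) : ℝ :=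
  ∫ t in Set.Ioi (0 : ℝ), Real.exp (-x * Real.cosh t)

/-- Dilogarithm Li₂(w) = Σ_{n>0} wⁿ/n². -/
noncomputable def Li2 (w : ℂ) : ℂ :=
  ∑' n : ℕ, w ^ (n + 1) / ((n : ℂ) + 1) ^ 2

/-- 𝒳_γ(ζ) = exp(πZ_γ/ζ + iφ_γ + πζZ̄_γ). -/
noncomputable def Xgam (Z : ℂ) (φ : ℝ) (ζ : ℂ) : ℂ :=
  Complex.exp ((Real.pi : ℂ) * Z / ζ + Complex.I * (φ : ℂ)
    + (Real.pi : ℂ) * ζ * (starRingEnd ℂ) Z)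

/-! On the ray `ζ = -s Z / |Z|` one has `𝒳_γ(ζ) = e^{iφ} e^{-π|Z|(s + s⁻¹)}`, so expanding `Li₂`
turns the integrand into a series whose `n`-th term integrates, through `s = eᵗ`, to
`2 e^{inφ} / n² · K₀(2πn|Z|)`. Summation and integration may be swapped because
`K₀(2πn|Z|) ≤ K₀(2π|Z|)` and `∑ 1/n²` converges. -/

open MeasureTheory Set Real

lemma sq_div_four_le_cosh (t : ℝ) : t ^ 2 / 4 ≤ cosh t := by
  have h₁ := quadratic_le_exp_of_nonneg (abs_nonneg t)
  have h₂ := add_one_le_exp (-|t|)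
  rw [← cosh_abs, cosh_eq]
  nlinarith [sq_abs t]

lemma integrable_exp_neg_mul_cosh {b : ℝ} (hb : 0 < b) :
    Integrable fun t : ℝ => exp (-b * cosh t) := by
  refine (integrable_exp_neg_mul_sq (div_pos hb four_pos)).mono' (by fun_prop)
    (ae_of_all _ fun t => ?_)
  rw [norm_of_nonneg (exp_pos _).le, exp_le_exp]
  nlinarith [sq_div_four_le_cosh t]

lemma K0_nonneg (x : ℝ) : 0 ≤ K0 x :=
  setIntegral_nonneg measurableSet_Ioi fun _ _ => (exp_pos _).le

lemma K0_antitoneOn : AntitoneOn K0 (Ioi 0) := fun x hx _ _ hxy =>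
  setIntegral_mono_on (integrable_exp_neg_mul_cosh (lt_of_lt_of_le hx hxy)).integrableOn
    (integrable_exp_neg_mul_cosh hx).integrableOn measurableSet_Ioi
    fun t _ => exp_le_exp.2 (by nlinarith [one_le_cosh t])

lemma abs_exp_smul_inv_mul_exp_neg_mul_add_inv (b t : ℝ) :
    |exp t| • ((exp t)⁻¹ * exp (-b * (exp t + (exp t)⁻¹))) = exp (-(2 * b) * cosh t) := by
  rw [smul_eq_mul, abs_of_pos (exp_pos t), mul_inv_cancel_left₀ (exp_pos t).ne', cosh_eq,
    exp_neg]
  ring_nf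

lemma integrableOn_inv_mul_exp_neg_mul_add_inv {b : ℝ} (hb : 0 < b) :
    IntegrableOn (fun s : ℝ => s⁻¹ * exp (-b * (s + s⁻¹))) (Ioi 0) := by
  rw [← image_univ.trans range_exp, integrableOn_image_iff_integrableOn_abs_deriv_smul
    MeasurableSet.univ (fun t _ => (hasDerivAt_exp t).hasDerivWithinAt) exp_injective.injOn]
  simpa only [abs_exp_smul_inv_mul_exp_neg_mul_add_inv, integrableOn_univ]
    using integrable_exp_neg_mul_cosh (mul_pos two_pos hb)

lemma integral_inv_mul_exp_neg_mul_add_inv (b : ℝ) :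
    ∫ s in Ioi (0 : ℝ), s⁻¹ * exp (-b * (s + s⁻¹)) = 2 * K0 (2 * b) := by
  rw [← image_univ.trans range_exp, integral_image_eq_integral_abs_deriv_smul
    MeasurableSet.univ (fun t _ => (hasDerivAt_exp t).hasDerivWithinAt) exp_injective.injOn]
  simp only [abs_exp_smul_inv_mul_exp_neg_mul_add_inv, setIntegral_univ, K0]
  simpa only [cosh_abs] using integral_comp_abs (f := fun t => exp (-(2 * b) * cosh t))

lemma integral_tsum_mul_inv_mul_exp_neg_mul_add_inv {a : ℕ → ℂ} (ha : Summable fun n => ‖a n‖)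
    {c : ℝ} (hc : 0 < c) :
    ∫ s in Ioi (0 : ℝ), ∑' n : ℕ, a n * ((s⁻¹ * exp (-((n + 1) * c) * (s + s⁻¹)) : ℝ) : ℂ)
      = ∑' n : ℕ, a n * ((2 * K0 (2 * ((n + 1) * c)) : ℝ) : ℂ) := by
  have hb (n : ℕ) : 0 < ((n : ℝ) + 1) * c := by positivity
  have hnorm (n : ℕ) :
      ∫ s in Ioi (0 : ℝ), ‖a n * ((s⁻¹ * exp (-((n + 1) * c) * (s + s⁻¹)) : ℝ) : ℂ)‖
        = ‖a n‖ * (2 * K0 (2 * ((n + 1) * c))) := by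
    rw [← integral_inv_mul_exp_neg_mul_add_inv, ← integral_const_mul]
    refine setIntegral_congr_fun measurableSet_Ioi fun s hs => ?_
    rw [norm_mul, Complex.norm_real, norm_of_nonneg]
    exact mul_nonneg (inv_nonneg.2 (le_of_lt hs)) (exp_pos _).le
  have hsum : Summable fun n : ℕ =>
      ∫ s in Ioi (0 : ℝ), ‖a n * ((s⁻¹ * exp (-((n + 1) * c) * (s + s⁻¹)) : ℝ) : ℂ)‖ := by
    simp only [hnorm]
    refine (ha.mul_right (2 * K0 (2 * c))).of_nonneg_of_le
      (fun n => mul_nonneg (norm_nonneg _) (mul_nonneg two_pos.le (K0_nonneg _))) fun n => ?_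
    gcongr
    refine K0_antitoneOn (mem_Ioi.2 (by positivity)) (mem_Ioi.2 (by positivity)) ?_
    nlinarith [Nat.cast_nonneg (α := ℝ) n]
  rw [← integral_tsum_of_summable_integral_norm
    (fun n => ((integrableOn_inv_mul_exp_neg_mul_add_inv (hb n)).ofReal.const_mul _)) hsum]
  refine tsum_congr fun n => ?_
  rw [integral_const_mul, integral_complex_ofReal, integral_inv_mul_exp_neg_mul_add_inv]

lemma summable_norm_exp_mul_div_sq (φ : ℝ) :
    Summable fun n : ℕ => ‖Complex.exp (Complex.I * ((n : ℂ) + 1) * φ) / ((n : ℂ) + 1) ^ 2‖ := by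
  have hn (n : ℕ) : ‖(n : ℂ) + 1‖ = n + 1 := by exact_mod_cast Complex.norm_natCast (n + 1)
  simpa [Complex.norm_exp, hn] using Real.summable_one_div_nat_add_rpow 1 2

lemma Xgam_neg_div_norm_mul {Z : ℂ} (hZ : Z ≠ 0) (φ : ℝ) {s : ℝ} (hs : s ≠ 0) :
    Xgam Z φ (-(((s : ℂ) / ((‖Z‖ : ℝ) : ℂ)) * Z))
      = Complex.exp (Complex.I * φ) * (exp (-(π * ‖Z‖ * (s + s⁻¹))) : ℂ) := by
  have hZ' : ((‖Z‖ : ℝ) : ℂ) ≠ 0 := by exact_mod_cast norm_ne_zero_iff.2 hZ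
  have hs' : (s : ℂ) ≠ 0 := by exact_mod_cast hs
  have hconj : (starRingEnd ℂ) Z = ((‖Z‖ : ℝ) : ℂ) ^ 2 / Z := by
    rw [eq_div_iff hZ, mul_comm, Complex.mul_conj']
  rw [Xgam, Complex.ofReal_exp, ← Complex.exp_add, hconj]
  congr 1
  push_cast
  field_simp
  ring

lemma inv_mul_Li2_Xgam_neg_div_norm_mul {Z : ℂ} (hZ : Z ≠ 0) (φ : ℝ) {s : ℝ} (hs : s ≠ 0) :
    (s : ℂ)⁻¹ * Li2 (Xgam Z φ (-(((s : ℂ) / ((‖Z‖ : ℝ) : ℂ)) * Z)))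
      = ∑' n : ℕ, Complex.exp (Complex.I * ((n : ℂ) + 1) * φ) / ((n : ℂ) + 1) ^ 2 *
          ((s⁻¹ * exp (-((n + 1) * (π * ‖Z‖)) * (s + s⁻¹)) : ℝ) : ℂ) := by
  rw [Xgam_neg_div_norm_mul hZ φ hs, Li2, ← tsum_mul_left]
  refine tsum_congr fun n => ?_
  rw [mul_pow, ← Complex.exp_nat_mul, ← Complex.ofReal_pow, ← Real.exp_nat_mul]
  push_cast
  ring_nf

theorem stmt_15 (Z : ℂ) (hZ : Z ≠ 0) (φ : ℝ) :
    (1 / (4 * (Real.pi : ℂ) * Complex.I)) *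
      ∫ s in Set.Ioi (0 : ℝ),
        (s : ℂ)⁻¹ * Li2 (Xgam Z φ (-(((s : ℂ) / ((‖Z‖ : ℝ) : ℂ)) * Z)))
    = (1 / (2 * (Real.pi : ℂ) * Complex.I)) *
      ∑' n : ℕ, Complex.exp (Complex.I * ((n : ℂ) + 1) * (φ : ℂ)) / ((n : ℂ) + 1) ^ 2 *
        ((K0 (2 * Real.pi * ((n : ℝ) + 1) * ‖Z‖) : ℝ) : ℂ) := by
  have hc : 0 < π * ‖Z‖ := by positivity
  rw [setIntegral_congr_fun measurableSet_Ioi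
      fun s hs => inv_mul_Li2_Xgam_neg_div_norm_mul hZ φ (ne_of_gt hs),
    integral_tsum_mul_inv_mul_exp_neg_mul_add_inv (summable_norm_exp_mul_div_sq φ) hc]
  have hterm (n : ℕ) :
      Complex.exp (Complex.I * ((n : ℂ) + 1) * φ) / ((n : ℂ) + 1) ^ 2 *
          ((2 * K0 (2 * ((n + 1) * (π * ‖Z‖))) : ℝ) : ℂ)
        = 2 * (Complex.exp (Complex.I * ((n : ℂ) + 1) * φ) / ((n : ℂ) + 1) ^ 2 *
          ((K0 (2 * π * ((n : ℝ) + 1) * ‖Z‖) : ℝ) : ℂ)) := by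
    rw [show 2 * ((n + 1) * (π * ‖Z‖)) = 2 * π * (n + 1) * ‖Z‖ by ring]
    push_cast
    ring
  rw [tsum_congr hterm, tsum_mul_left, ← mul_assoc]
  congr 1
  field_simp
  ring
end
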